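/- arXiv:2009.08865 — 9 statements merged into one kernel-verified Lean document; each statement's English description precedes it below -/
import Mathlib

section
/- If two permutations v and w in S_n have the same odd diagram, then v^{-1}(1) = w^{-1}(1); that is, the value 1 occurs in the same position in both permutations. -/
def oddDiagram {n : ℕ} (w : Equiv.Perm (Fin n)) : Finset (Fin n × Fin n) :=
  Finset.univ.filter (fun p => (p.2 : ℕ) < (w p.1 : ℕ) ∧ (p.1 : ℕ) < (w.symm p.2 : ℕ) ∧
    (p.1 : ℕ) % 2 ≠ (w.symm p.2 : ℕ) % 2)

def invLength {n : ℕ} (w : Equiv.Perm (Fin n)) : ℕ :=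
  (Finset.univ.filter (fun p : Fin n × Fin n => p.1 < p.2 ∧ w p.2 < w p.1)).card

def bruhatLE {n : ℕ} : Equiv.Perm (Fin n) → Equiv.Perm (Fin n) → Prop :=
  Relation.ReflTransGen (fun u v => ∃ t : Equiv.Perm (Fin n), t.IsSwap ∧ v = u * t ∧ invLength u < invLength v)

def contains213 {n : ℕ} (w : Equiv.Perm (Fin n)) : Prop :=
  ∃ i h j : Fin n, i < h ∧ h < j ∧ w h < w i ∧ w i < w j

def contains312 {n : ℕ} (w : Equiv.Perm (Fin n)) : Prop :=
  ∃ i h j : Fin n, i < h ∧ h < j ∧ w h < w j ∧ w j < w i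

/-! Indices are 0-based, so column `0` holds the value `1`. Every row `i < u⁻¹ 0` meets column `0`
in the diagram of `u`, because `u i ≠ 0`; the odd diagram keeps those rows of parity opposite to
`u⁻¹ 0`. When `u⁻¹ 0 > 0`, row `u⁻¹ 0 - 1` is one of them, so `u⁻¹ 0` is one more than the largest
row the odd diagram occupies in column `0` (and `0` if there is none). -/

lemma mem_oddDiagram_zero_iff {n : ℕ} (hn : 0 < n) (u : Equiv.Perm (Fin n)) (i : Fin n) :
    (i, (⟨0, hn⟩ : Fin n)) ∈ oddDiagram u ↔
      (i : ℕ) < (u.symm ⟨0, hn⟩ : ℕ) ∧ (i : ℕ) % 2 ≠ (u.symm ⟨0, hn⟩ : ℕ) % 2 := by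
  simp only [oddDiagram, Finset.mem_filter, Finset.mem_univ, true_and]
  refine ⟨fun ⟨_, hlt, hpar⟩ => ⟨hlt, hpar⟩, fun ⟨hlt, hpar⟩ => ⟨?_, hlt, hpar⟩⟩
  have hne : u i ≠ ⟨0, hn⟩ := by
    intro hzero
    rw [← hzero, Equiv.symm_apply_apply] at hlt
    exact lt_irrefl _ hlt
  exact Nat.pos_of_ne_zero fun hval => hne (Fin.ext hval)

lemma symm_zero_le_of_oddDiagram_subset {n : ℕ} (hn : 0 < n) {v w : Equiv.Perm (Fin n)}
    (h : oddDiagram v ⊆ oddDiagram w) : v.symm ⟨0, hn⟩ ≤ w.symm ⟨0, hn⟩ := by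
  rw [Fin.le_def]
  rcases Nat.eq_zero_or_pos (v.symm ⟨0, hn⟩ : ℕ) with hzero | hpos
  · omega
  have habove : ((⟨(v.symm ⟨0, hn⟩ : ℕ) - 1, by omega⟩ : Fin n), (⟨0, hn⟩ : Fin n)) ∈
      oddDiagram v :=
    (mem_oddDiagram_zero_iff hn v _).mpr ⟨by simp only; omega, by simp only; omega⟩
  have hlt := ((mem_oddDiagram_zero_iff hn w _).mp (h habove)).1
  simp only at hlt
  omega

theorem stmt0 {n : ℕ} (hn : 0 < n) (v w : Equiv.Perm (Fin n))
    (h : oddDiagram v = oddDiagram w) :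
    v.symm ⟨0, hn⟩ = w.symm ⟨0, hn⟩ :=
  le_antisymm (symm_zero_le_of_oddDiagram_subset hn h.le)
    (symm_zero_le_of_oddDiagram_subset hn h.ge)
end

section
/- If v and w are distinct permutations in S_n with the same odd diagram, then one of them contains the pattern 213 and the other contains the pattern 312. -/
open Equiv Finset

theorem Equiv.iff_of_forall_ne_iff {α β : Type*} [Fintype α] [Fintype β] [DecidableEq α]
    (σ τ : α ≃ β) (P : β → Prop) [DecidablePred P] (c : α)
    (h : ∀ x ≠ c, (P (σ x) ↔ P (τ x))) : P (σ c) ↔ P (τ c) := by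
  let f : β → ℕ := fun y => if P y then 1 else 0
  have hrest : ∑ x ∈ univ.erase c, f (σ x) = ∑ x ∈ univ.erase c, f (τ x) :=
    sum_congr rfl fun x hx => by simp only [f, h x (ne_of_mem_erase hx)]
  have hc : f (σ c) = f (τ c) := by
    have hσ := add_sum_erase univ (fun x => f (σ x)) (mem_univ c)
    have hτ := add_sum_erase univ (fun x => f (τ x)) (mem_univ c)
    rw [Equiv.sum_comp] at hσ hτ
    omega
  by_cases hσ : P (σ c) <;> by_cases hτ : P (τ c) <;> simp_all [f]

variable {n : ℕ}

@[simp]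
theorem mem_oddDiagram {u : Perm (Fin n)} {i j : Fin n} :
    (i, j) ∈ oddDiagram u ↔
      (j : ℕ) < u i ∧ (i : ℕ) < u.symm j ∧ (i : ℕ) % 2 ≠ (u.symm j : ℕ) % 2 := by
  simp [oddDiagram]

theorem mod_two_symm_apply_eq_of_oddDiagram_eq {v w : Perm (Fin n)}
    (h : oddDiagram v = oddDiagram w) {i j : Fin n} (hv : j < v i) (hw : j < w i)
    (hvi : i < v.symm j) (hwi : i < w.symm j) :
    (v.symm j : ℕ) % 2 = (w.symm j : ℕ) % 2 := by
  have := Finset.ext_iff.mp h (i, j)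
  simp only [mem_oddDiagram] at this
  omega

section FirstDifference

variable {v w : Perm (Fin n)} {a : Fin n}

theorem symm_apply_eq_of_eqOn_lt (hpre : ∀ i < a, v i = w i) {x : Fin n} (hx : v.symm x < a) :
    w.symm x = v.symm x := by
  rw [symm_apply_eq, ← hpre _ hx, apply_symm_apply]

theorem lt_symm_apply_of_eqOn_lt (hpre : ∀ i < a, v i = w i) (hne : v a ≠ w a) :
    a < w.symm (v a) := by
  rcases lt_trichotomy (w.symm (v a)) a with hlt | heq | hgt
  · have := symm_apply_eq_of_eqOn_lt (fun i hi => (hpre i hi).symm) hlt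
    rw [symm_apply_apply] at this
    omega
  · exact absurd ((symm_apply_eq w).1 heq) hne
  · exact hgt

variable (h : oddDiagram v = oddDiagram w) (hpre : ∀ i < a, v i = w i) (hlt : v a < w a)
include h hpre hlt

theorem add_two_le_symm_apply_and_mod_two :
    (a : ℕ) + 2 ≤ w.symm (v a) ∧ (w.symm (v a) : ℕ) % 2 = a % 2 := by
  have hq := lt_symm_apply_of_eqOn_lt hpre hlt.ne
  have cell := Finset.ext_iff.mp h (a, v a)
  simp only [mem_oddDiagram, symm_apply_apply] at cell
  omega

theorem apply_succ_lt_apply_of_first_diff (k : Fin n) (hk : (k : ℕ) = a + 1) : w k < v a := by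
  have hq := add_two_le_symm_apply_and_mod_two h hpre hlt
  have hne : w k ≠ v a := fun e => by rw [← e, symm_apply_apply] at hq; omega
  have cell := Finset.ext_iff.mp h (k, v a)
  simp only [mem_oddDiagram, symm_apply_apply] at cell
  omega

theorem contains312_of_first_diff : contains312 w := by
  have hq := (add_two_le_symm_apply_and_mod_two h hpre hlt).1
  let k : Fin n := ⟨a + 1, by omega⟩
  refine ⟨a, k, w.symm (v a), Fin.lt_def.2 (by simp [k]), Fin.lt_def.2 (by simp [k]; omega), ?_, ?_⟩
  · rw [apply_symm_apply]; exact apply_succ_lt_apply_of_first_diff h hpre hlt k rfl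
  · rwa [apply_symm_apply]

theorem mod_two_symm_apply_eq_of_tail_lt (hc : (v.symm (w a) : ℕ) = a + 1)
    (htail : ∀ k : Fin n, (a : ℕ) + 1 < k → v k < v a) {x : Fin n} (hx : x ≠ w a) :
    (v.symm x : ℕ) % 2 = (w.symm x : ℕ) % 2 := by
  rcases lt_trichotomy (v.symm x) a with hxa | hxa | hxa
  · rw [symm_apply_eq_of_eqOn_lt hpre hxa]
  · obtain rfl : x = v a := by rw [← hxa, apply_symm_apply]
    have := add_two_le_symm_apply_and_mod_two h hpre hlt
    rw [symm_apply_apply]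
    omega
  · have hxb : x < v a := by
      have hne : v.symm x ≠ v.symm (w a) := v.symm.injective.ne hx
      simpa using htail (v.symm x) (by omega)
    have hwx : a < w.symm x := by
      rcases lt_trichotomy (w.symm x) a with h' | h' | h'
      · have := symm_apply_eq_of_eqOn_lt (fun i hi => (hpre i hi).symm) h'
        omega
      · exact absurd ((symm_apply_eq w).1 h') hx
      · exact h'
    exact mod_two_symm_apply_eq_of_oddDiagram_eq h hxb (hxb.trans hlt) hxa hwx

theorem contains213_of_first_diff : contains213 v := by
  by_contra hv
  have avoid : ∀ i j, i < j → ∀ k, j < k → v j < v i → v k ≤ v i := by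
    simpa [contains213] using hv
  have hq := (add_two_le_symm_apply_and_mod_two h hpre hlt).1
  obtain ⟨a₁, ha₁⟩ : ∃ k : Fin n, (k : ℕ) = a + 1 := ⟨⟨a + 1, by omega⟩, rfl⟩
  have hd : w a₁ < v a := apply_succ_lt_apply_of_first_diff h hpre hlt a₁ ha₁
  have hr : a < v.symm (w a₁) ∧ (v.symm (w a₁) : ℕ) % 2 ≠ a % 2 := by
    have cell := Finset.ext_iff.mp h (a, w a₁)
    simp only [mem_oddDiagram, symm_apply_apply] at cell
    omega
  have hp : a < v.symm (w a) := lt_symm_apply_of_eqOn_lt (fun i hi => (hpre i hi).symm) hlt.ne'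
  have hr₁ : (v.symm (w a₁) : ℕ) ≠ a + 1 := by
    intro hr₁
    have hva₁ : v a₁ = w a₁ := by rw [← (symm_apply_eq v).1 (Fin.ext (hr₁.trans ha₁.symm))]
    have hp₁ : a₁ < v.symm (w a) := by
      have : v.symm (w a) ≠ a₁ := fun e => by
        rw [symm_apply_eq, hva₁] at e
        exact absurd e (hd.trans hlt).ne'
      omega
    have := avoid a a₁ (by omega) _ hp₁ (hva₁ ▸ hd)
    rw [apply_symm_apply] at this
    exact absurd hlt (not_lt.2 this)
  obtain ⟨a₂, ha₂⟩ : ∃ k : Fin n, (k : ℕ) = a + 2 := ⟨⟨a + 2, by omega⟩, rfl⟩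
  have h₂ : v a₂ < w a₁ := by
    have hne : v a₂ ≠ w a₁ := fun e => by rw [← e, symm_apply_apply] at hr₁ hr; omega
    have cell := Finset.ext_iff.mp h (a₂, w a₁)
    simp only [mem_oddDiagram, symm_apply_apply] at cell
    omega
  have htail : ∀ k : Fin n, (a : ℕ) + 1 < k → v k < v a := by
    intro k hk
    rcases eq_or_lt_of_le (show a₂ ≤ k by omega) with rfl | hk₂
    · exact h₂.trans hd
    · exact lt_of_le_of_ne (avoid a a₂ (by omega) k hk₂ (h₂.trans hd))
        (v.injective.ne (by omega))
  have hc : (v.symm (w a) : ℕ) = a + 1 := by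
    by_contra hc
    have := htail (v.symm (w a)) (by omega)
    rw [apply_symm_apply] at this
    exact lt_asymm hlt this
  have hpar := Equiv.iff_of_forall_ne_iff v.symm w.symm (fun i => (i : ℕ) % 2 = 0) (w a)
    fun x hx => by rw [mod_two_symm_apply_eq_of_tail_lt h hpre hlt hc htail hx]
  simp only [symm_apply_apply, hc] at hpar
  omega

end FirstDifference

theorem stmt1 {n : ℕ} (v w : Equiv.Perm (Fin n)) (hne : v ≠ w)
    (h : oddDiagram v = oddDiagram w) :
    (contains213 v ∧ contains312 w) ∨ (contains312 v ∧ contains213 w) := by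
  obtain ⟨a, ha, hmin⟩ :=
    WellFounded.has_min wellFounded_lt {i | v i ≠ w i} (not_forall.1 (mt Equiv.ext hne))
  have hpre : ∀ i < a, v i = w i := fun i hi => by_contra fun hi' => hmin i hi' hi
  rcases lt_or_gt_of_ne ha with hlt | hlt
  · exact Or.inl ⟨contains213_of_first_diff h hpre hlt, contains312_of_first_diff h hpre hlt⟩
  · have hpre' : ∀ i < a, w i = v i := fun i hi => (hpre i hi).symm
    exact Or.inr ⟨contains312_of_first_diff h.symm hpre' hlt,
      contains213_of_first_diff h.symm hpre' hlt⟩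
end

section
/- The map sending a permutation to its odd diagram is injective on the set of 213-avoiding permutations in S_n: if v ≠ w both avoid the pattern 213, then D_o(v) ≠ D_o(w). -/
/-!
Induction on `n`. Suppose `v, w` avoid 213 and `D_o(v) = D_o(w)`. If `v(0) < w(0)`, then
column `v(0)` of `D_o(v)` is empty, so no `i < w⁻¹(v(0))` of the opposite parity has
`w(i) > v(0)`; taking `i = 0` and then `i = 1` gives `w(1) < v(0) < w(0)`, so `w(0)` is the
largest value by 213-avoidance, while `v(0) < v(1)`. Row `0` of `D_o(w)` then has one box for
every odd position, whereas row `0` of `D_o(v)` misses the odd position `1`. Hence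
`v(0) = w(0)`, and deleting the first entry of both permutations keeps them 213-avoiding and
deletes row `0` and column `v(0)` of the common odd diagram.
-/

open Finset Equiv

section

variable {n : ℕ}

lemma mem_oddDiagram_s2 {w : Perm (Fin n)} {p : Fin n × Fin n} :
    p ∈ oddDiagram w ↔ (p.2 : ℕ) < w p.1 ∧ (p.1 : ℕ) < w.symm p.2 ∧
      (p.1 : ℕ) % 2 ≠ (w.symm p.2 : ℕ) % 2 := by
  simp [oddDiagram]

lemma notMem_oddDiagram_apply_zero (w : Perm (Fin (n + 1))) (i : Fin (n + 1)) :
    (i, w 0) ∉ oddDiagram w := by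
  simp [mem_oddDiagram_s2]

lemma card_row_zero_oddDiagram (w : Perm (Fin (n + 1))) :
    #{j | (0, j) ∈ oddDiagram w} = #{p | w p < w 0 ∧ Odd (p : ℕ)} := by
  refine card_equiv w.symm fun j => ?_
  simp only [mem_filter, mem_univ, true_and, mem_oddDiagram_s2, Fin.val_zero, apply_symm_apply,
    Fin.lt_def, Nat.odd_iff]
  omega

lemma card_row_zero_oddDiagram_of_apply_zero_eq_last {w : Perm (Fin (n + 1))}
    (hw0 : w 0 = Fin.last n) :
    #{j | (0, j) ∈ oddDiagram w} = #{p : Fin (n + 1) | Odd (p : ℕ)} := by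
  rw [card_row_zero_oddDiagram]
  congr 1
  refine filter_congr fun p _ => and_iff_right_of_imp fun hp => ?_
  refine hw0 ▸ lt_of_le_of_ne (Fin.le_last _) fun hlast => ?_
  rw [← hw0, w.injective.eq_iff] at hlast
  simp [hlast] at hp

lemma card_row_zero_oddDiagram_lt_of_apply_zero_lt_apply_one {v : Perm (Fin (n + 1))}
    (h : v 0 < v 1) : #{j | (0, j) ∈ oddDiagram v} < #{p : Fin (n + 1) | Odd (p : ℕ)} := by
  rw [card_row_zero_oddDiagram]
  refine card_lt_card <| ssubset_iff_of_subset (monotone_filter_right _ fun _ _ => And.right)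
    |>.2 ⟨1, ?_, by simp [h.not_gt]⟩
  rcases n with _ | m
  · exact absurd rfl h.ne
  · simp

lemma apply_zero_eq_last_of_apply_one_lt {w : Perm (Fin (n + 1))} (hw : ¬ contains213 w)
    (h : w 1 < w 0) : w 0 = Fin.last n := by
  by_contra hne
  set q := w.symm (Fin.last n)
  have hq : w q = Fin.last n := w.apply_symm_apply _
  have hq0 : q ≠ 0 := fun h0 => hne (h0 ▸ hq)
  have hq1 : q ≠ 1 := fun h1 => (h.trans_le (Fin.le_last _)).ne (h1 ▸ hq)
  have h10 : (1 : Fin (n + 1)) ≠ 0 := fun h10 => h.ne (congrArg w h10)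
  refine hw ⟨0, 1, q, Fin.pos_iff_ne_zero.2 h10, ?_, h,
    hq ▸ lt_of_le_of_ne (Fin.le_last _) hne⟩
  rcases n with _ | m
  · exact absurd rfl h10
  · simp only [Fin.lt_def, ← Fin.val_ne_iff, Fin.val_zero, Fin.val_one] at hq0 hq1 ⊢
    omega

lemma apply_zero_lt_apply_one {v : Perm (Fin (n + 1))} (hv : ¬ contains213 v)
    (h : v 0 ≠ Fin.last n) : v 0 < v 1 := by
  refine lt_of_le_of_ne (not_lt.1 fun h1 => h (apply_zero_eq_last_of_apply_one_lt hv h1)) ?_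
  intro h01
  rcases n with _ | m
  · exact h (Fin.ext (by omega))
  · exact one_ne_zero (v.injective h01).symm

lemma apply_zero_not_lt_of_oddDiagram_eq {v w : Perm (Fin (n + 1))} (hv : ¬ contains213 v)
    (hw : ¬ contains213 w) (hD : oddDiagram v = oddDiagram w) : ¬ v 0 < w 0 := by
  intro hlt
  set P := w.symm (v 0)
  have hwP : w P = v 0 := w.apply_symm_apply _
  have hcol (i : Fin (n + 1)) :
      ¬ ((v 0 : ℕ) < w i ∧ (i : ℕ) < P ∧ (i : ℕ) % 2 ≠ (P : ℕ) % 2) := by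
    rw [← mem_oddDiagram_s2 (p := (i, v 0)), ← hD]
    exact notMem_oddDiagram_apply_zero v i
  have hP0 : 0 < (P : ℕ) := by
    refine Fin.lt_def.1 (Fin.pos_iff_ne_zero.2 fun h0 => hlt.ne' ?_)
    rwa [h0] at hwP
  have hPeven : (P : ℕ) % 2 = 0 := by
    by_contra hodd
    exact hcol 0 ⟨hlt, hP0, by simp; omega⟩
  have hval1 : ((1 : Fin (n + 1)) : ℕ) = 1 := by
    rw [Fin.val_one', Nat.mod_eq_of_lt (by omega)]
  have hw1 : w 1 < v 0 := by
    refine lt_of_le_of_ne (not_lt.1 fun h1 => hcol 1 ⟨h1, ?_, ?_⟩) fun h1 => ?_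
    · omega
    · omega
    · have := congrArg Fin.val (w.injective (hwP.trans h1.symm))
      omega
  have hw0 := apply_zero_eq_last_of_apply_one_lt hw (hw1.trans hlt)
  have hv01 := apply_zero_lt_apply_one hv (hw0 ▸ hlt.ne)
  have hrow := card_row_zero_oddDiagram_lt_of_apply_zero_lt_apply_one hv01
  rw [hD, card_row_zero_oddDiagram_of_apply_zero_eq_last hw0] at hrow
  exact lt_irrefl _ hrow

lemma apply_zero_eq_of_oddDiagram_eq {v w : Perm (Fin (n + 1))} (hv : ¬ contains213 v)
    (hw : ¬ contains213 w) (hD : oddDiagram v = oddDiagram w) : v 0 = w 0 :=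
  le_antisymm (not_lt.1 (apply_zero_not_lt_of_oddDiagram_eq hw hv hD.symm))
    (not_lt.1 (apply_zero_not_lt_of_oddDiagram_eq hv hw hD))

/-- The permutation obtained from `v` by deleting its first entry and standardizing. -/
def eraseFirst (v : Perm (Fin (n + 1))) : Perm (Fin n) :=
  removeNone (((finSuccEquiv' 0).symm.trans v).trans (finSuccEquiv' (v 0)))

lemma apply_succ_eq_succAbove_eraseFirst (v : Perm (Fin (n + 1))) (i : Fin n) :
    v i.succ = (v 0).succAbove (eraseFirst v i) := by
  obtain ⟨k, hk⟩ := Fin.exists_succAbove_eq (x := v i.succ) (y := v 0)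
    (v.injective.ne (Fin.succ_ne_zero i))
  have hsome := removeNone_some (((finSuccEquiv' 0).symm.trans v).trans (finSuccEquiv' (v 0)))
    (x := i) ⟨k, by simp [finSuccEquiv'_symm_some, ← hk, finSuccEquiv'_succAbove]⟩
  simp only [trans_apply, finSuccEquiv'_symm_some, Fin.succAbove_zero, ← hk,
    finSuccEquiv'_succAbove, Option.some_inj] at hsome
  rw [← hk, eraseFirst, hsome]

lemma symm_succAbove_eq_succ_eraseFirst_symm (v : Perm (Fin (n + 1))) (j : Fin n) :
    v.symm ((v 0).succAbove j) = ((eraseFirst v).symm j).succ := by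
  rw [v.symm_apply_eq, apply_succ_eq_succAbove_eraseFirst, apply_symm_apply]

lemma not_contains213_eraseFirst {v : Perm (Fin (n + 1))} (hv : ¬ contains213 v) :
    ¬ contains213 (eraseFirst v) := by
  rintro ⟨i, h, j, hih, hhj, hvhi, hvij⟩
  refine hv ⟨i.succ, h.succ, j.succ, Fin.succ_lt_succ_iff.2 hih, Fin.succ_lt_succ_iff.2 hhj,
    ?_, ?_⟩
  all_goals
    rw [apply_succ_eq_succAbove_eraseFirst, apply_succ_eq_succAbove_eraseFirst]
    exact Fin.succAbove_lt_succAbove_iff.2 ‹_›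

lemma mem_oddDiagram_eraseFirst {v : Perm (Fin (n + 1))} {i j : Fin n} :
    (i, j) ∈ oddDiagram (eraseFirst v) ↔ (i.succ, (v 0).succAbove j) ∈ oddDiagram v := by
  simp only [mem_oddDiagram_s2, apply_succ_eq_succAbove_eraseFirst,
    symm_succAbove_eq_succ_eraseFirst_symm, Fin.val_succ, ← Fin.lt_def,
    Fin.succAbove_lt_succAbove_iff]
  omega

lemma eq_of_apply_zero_eq_of_eraseFirst_eq {v w : Perm (Fin (n + 1))} (h0 : v 0 = w 0)
    (h : eraseFirst v = eraseFirst w) : v = w := by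
  ext x
  refine Fin.cases ?_ (fun i => ?_) x
  · rw [h0]
  · rw [apply_succ_eq_succAbove_eraseFirst, apply_succ_eq_succAbove_eraseFirst, h0, h]

end

theorem oddDiagram_injOn_not_contains213 (n : ℕ) :
    Set.InjOn (oddDiagram (n := n)) {w | ¬ contains213 w} := by
  induction n with
  | zero => exact fun v _ w _ _ => Subsingleton.elim v w
  | succ n ih =>
    intro v hv w hw hD
    have h0 := apply_zero_eq_of_oddDiagram_eq hv hw hD
    refine eq_of_apply_zero_eq_of_eraseFirst_eq h0 <|
      ih (not_contains213_eraseFirst hv) (not_contains213_eraseFirst hw) ?_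
    ext ⟨i, j⟩
    rw [mem_oddDiagram_eraseFirst, mem_oddDiagram_eraseFirst, hD, h0]

theorem stmt2 {n : ℕ} (v w : Equiv.Perm (Fin n)) (hv : ¬ contains213 v)
    (hw : ¬ contains213 w) (hne : v ≠ w) :
    oddDiagram v ≠ oddDiagram w :=
  fun hD => hne (oddDiagram_injOn_not_contains213 n hv hw hD)
end

section
/- Let v in S_n and let v̄ = v·(i j) with i < j, and set m = min{v(i), v(j)}, M = max{v(i), v(j)}. Then D_o(v) = D_o(v̄) if and only if: (R1) i ≡ j (mod 2); (R2) v(x) < m for all x in {i+1, i+3, ..., j-1}; and (R3) v(y) ∉ [m, M] for all y in {j+1, j+3, ...} ∩ [n]. -/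
/-!
Exchanging the values of `v` at `i` and `j` only affects rows `i`, `j` and columns `v i`, `v j`
of the odd diagram, so writing each cell as `(p, v r)` turns the equality of the two diagrams into
a cell-by-cell check over these few rows and columns. As `v = v̄ · (i j)` and (R1)–(R3) read the
same for `v` and `v̄`, one may assume `v i < v j`. Then a failure of (R1), (R2) at `x` or (R3) at
`y` exhibits the cell `(i, v i)`, `(x, v i)` or `(i, v y)` of `D_o(v̄)` that is missing from
`D_o(v)`, while under (R1)–(R3) no cell differs.
-/

open Equiv

variable {n : ℕ}

theorem mem_oddDiagram_apply (w : Perm (Fin n)) (p r : Fin n) :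
    (p, w r) ∈ oddDiagram w ↔ w r < w p ∧ p < r ∧ (p : ℕ) % 2 ≠ (r : ℕ) % 2 := by
  simp only [oddDiagram, Finset.mem_filter, Finset.mem_univ, true_and, symm_apply_apply]
  exact Iff.rfl

theorem oddDiagram_mul_swap_eq_iff (v : Perm (Fin n)) (i j : Fin n) :
    oddDiagram (v * swap i j) = oddDiagram v ↔ ∀ p r : Fin n,
      (v r < v (swap i j p) ∧ p < swap i j r ∧ (p : ℕ) % 2 ≠ (swap i j r : ℕ) % 2) ↔
        (v r < v p ∧ p < r ∧ (p : ℕ) % 2 ≠ (r : ℕ) % 2) := by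
  have hmem (p r : Fin n) : (p, v r) ∈ oddDiagram (v * swap i j) ↔
      v r < v (swap i j p) ∧ p < swap i j r ∧ (p : ℕ) % 2 ≠ (swap i j r : ℕ) % 2 := by
    simpa using mem_oddDiagram_apply (v * swap i j) p (swap i j r)
  refine ⟨fun h p r => ?_, fun h => ?_⟩
  · rw [← hmem, ← mem_oddDiagram_apply, h]
  · ext ⟨p, q⟩
    obtain ⟨r, rfl⟩ := v.surjective q
    rw [hmem, mem_oddDiagram_apply, h]

/-- Conditions (R1), (R2) and (R3). -/
def SwapConditions (v : Perm (Fin n)) (i j : Fin n) : Prop :=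
  (i : ℕ) % 2 = (j : ℕ) % 2 ∧
    (∀ x : Fin n, i < x → x < j → (x : ℕ) % 2 ≠ (i : ℕ) % 2 → v x < min (v i) (v j)) ∧
    (∀ y : Fin n, j < y → (y : ℕ) % 2 ≠ (j : ℕ) % 2 →
      ¬ (min (v i) (v j) ≤ v y ∧ v y ≤ max (v i) (v j)))

section

variable {v : Perm (Fin n)} {i j : Fin n}

theorem SwapConditions.mul_swap (hij : i < j) (h : SwapConditions v i j) :
    SwapConditions (v * swap i j) i j := by
  obtain ⟨hpar, hmid, hright⟩ := h
  have hswap_i : (v * swap i j) i = v j := by simp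
  have hswap_j : (v * swap i j) j = v i := by simp
  refine ⟨hpar, fun x hix hxj hx => ?_, fun y hjy hy => ?_⟩
  · rw [hswap_i, hswap_j, min_comm, Perm.mul_apply, swap_apply_of_ne_of_ne hix.ne' hxj.ne]
    exact hmid x hix hxj hx
  · rw [hswap_i, hswap_j, min_comm, max_comm, Perm.mul_apply,
      swap_apply_of_ne_of_ne (hij.trans hjy).ne' hjy.ne']
    exact hright y hjy hy

theorem swapConditions_mul_swap_iff (hij : i < j) :
    SwapConditions (v * swap i j) i j ↔ SwapConditions v i j :=
  ⟨fun h => by simpa using h.mul_swap hij, SwapConditions.mul_swap hij⟩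

theorem oddDiagram_mul_swap_eq_iff_of_lt (hij : i < j) (hv : v i < v j) :
    oddDiagram (v * swap i j) = oddDiagram v ↔ SwapConditions v i j := by
  simp only [SwapConditions, min_eq_left hv.le, max_eq_right hv.le, not_and_or, not_le,
    oddDiagram_mul_swap_eq_iff]
  have hinj : ∀ x y, v x = v y → x = y := fun _ _ h => v.injective h
  constructor
  · intro h
    have hpar : (i : ℕ) % 2 = (j : ℕ) % 2 := by
      have hcell := h i i
      simp only [swap_apply_left] at hcell
      omega
    refine ⟨hpar, fun x hix hxj hx => ?_, fun y hjy hy => ?_⟩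
    · have hcell := h x i
      rw [swap_apply_of_ne_of_ne hix.ne' hxj.ne, swap_apply_left] at hcell
      have := hinj x i
      omega
    · have hcell := h i y
      rw [swap_apply_left, swap_apply_of_ne_of_ne (hij.trans hjy).ne' hjy.ne'] at hcell
      have := hinj y i; have := hinj y j
      omega
  · rintro ⟨hpar, hmid, hright⟩ p r
    -- split on whether `p` and `r` are `i`, `j` or neither; (R2) at `p`, `r` and (R3) at `r` suffice
    have := hmid p; have := hmid r; have := hright r
    have := hinj r i; have := hinj r j
    rcases eq_or_ne p i with hpi | hpi <;> rcases eq_or_ne p j with hpj | hpj <;>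
      rcases eq_or_ne r i with hri | hri <;> rcases eq_or_ne r j with hrj | hrj <;>
      simp only [hpi, hpj, hri, hrj, swap_apply_left, swap_apply_right, swap_apply_of_ne_of_ne,
        ne_eq, not_false_eq_true] <;> omega

end

theorem stmt5 {n : ℕ} (v : Equiv.Perm (Fin n)) (i j : Fin n) (hij : i < j) :
    oddDiagram (v * Equiv.swap i j) = oddDiagram v ↔
      ((i : ℕ) % 2 = (j : ℕ) % 2 ∧
       (∀ x : Fin n, i < x → x < j → (x : ℕ) % 2 ≠ (i : ℕ) % 2 → v x < min (v i) (v j)) ∧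
       (∀ y : Fin n, j < y → (y : ℕ) % 2 ≠ (j : ℕ) % 2 →
          ¬ (min (v i) (v j) ≤ v y ∧ v y ≤ max (v i) (v j)))) := by
  rcases lt_or_gt_of_ne (v.injective.ne hij.ne) with hv | hv
  · exact oddDiagram_mul_swap_eq_iff_of_lt hij hv
  · have hv' : (v * swap i j) i < (v * swap i j) j := by simpa using hv
    have key := oddDiagram_mul_swap_eq_iff_of_lt hij hv'
    rwa [mul_swap_mul_self, eq_comm, swapConditions_mul_swap_iff hij] at key
end

section
/- If v ≠ v̄ are permutations in S_n that differ by a single transposition (i.e., v̄ = v·(i j) for some i < j with v(i) ≠ v(j)) and have the same odd diagram, then the positions i, j-1, j carry values forming a 213-pattern in one of the two permutations and a 312-pattern in the other. In particular, any legal Bruhat edge is a pattern swap. -/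
/-!
Put `w = v * (i j)`, so `w i = v j`, `w j = v i` and `w⁻¹ = (i j) ∘ v⁻¹`; by symmetry between `v` and
`w` we may assume `v i < v j`. If `i` and `j` had different parities, the cell `(i, v i)` would lie in
`D_o(w)` (its column is reached by `w` in row `j`) but never in `D_o(v)`. For `k` strictly between `i`
and `j` of the other parity, a value `v i < v k < v j` would put `(i, v k)` into `D_o(w) \ D_o(v)`,
and a value `v k > v j` would put `(k, v j)` into `D_o(v) \ D_o(w)`. So `v k < v i`; taking
`k = j - 1`, which has the other parity and exceeds `i`, gives the 213-pattern in `v` and the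
312-pattern in `w`.
-/

open Equiv

namespace OddDiagram

variable {n : ℕ}

theorem mem_oddDiagram {w : Perm (Fin n)} {a b : Fin n} :
    (a, b) ∈ oddDiagram w ↔
      (b : ℕ) < w a ∧ (a : ℕ) < w.symm b ∧ (a : ℕ) % 2 ≠ (w.symm b : ℕ) % 2 := by
  simp [oddDiagram]

theorem mul_swap_symm_apply (v : Perm (Fin n)) (i j b : Fin n) :
    (v * swap i j).symm b = swap i j (v.symm b) := by
  rw [symm_apply_eq, Perm.mul_apply, swap_apply_self, apply_symm_apply]

theorem oddDiagram_mul_swap_eq_symm {v : Perm (Fin n)} {i j : Fin n}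
    (h : oddDiagram v = oddDiagram (v * swap i j)) :
    oddDiagram (v * swap i j) = oddDiagram (v * swap i j * swap i j) := by
  rw [mul_swap_mul_self, h]

variable {v : Perm (Fin n)} {i j : Fin n}

theorem val_mod_two_eq_of_oddDiagram_mul_swap_eq (hij : i < j) (hv : v i < v j)
    (h : oddDiagram v = oddDiagram (v * swap i j)) : (i : ℕ) % 2 = (j : ℕ) % 2 := by
  by_contra hpar
  have hw : (i, v i) ∈ oddDiagram (v * swap i j) := by
    rw [mem_oddDiagram, mul_swap_symm_apply, symm_apply_apply, swap_apply_left,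
      Perm.mul_apply, swap_apply_left]
    exact ⟨hv, hij, hpar⟩
  rw [← h, mem_oddDiagram] at hw
  exact lt_irrefl _ hw.1

theorem apply_lt_of_oddDiagram_mul_swap_eq (hij : i < j) (hv : v i < v j)
    (h : oddDiagram v = oddDiagram (v * swap i j)) {k : Fin n} (hik : i < k) (hkj : k < j)
    (hpar : (k : ℕ) % 2 ≠ (j : ℕ) % 2) : v k < v i := by
  have hpar' : (i : ℕ) % 2 ≠ (k : ℕ) % 2 := by
    rw [val_mod_two_eq_of_oddDiagram_mul_swap_eq hij hv h]; exact Ne.symm hpar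
  have hswap : swap i j k = k := swap_apply_of_ne_of_ne hik.ne' hkj.ne
  by_contra! hle
  rcases (v.injective.ne hkj.ne).lt_or_gt with hvkj | hvjk
  · have hw : (i, v k) ∈ oddDiagram (v * swap i j) := by
      rw [mem_oddDiagram, mul_swap_symm_apply, symm_apply_apply, hswap, Perm.mul_apply,
        swap_apply_left]
      exact ⟨hvkj, hik, hpar'⟩
    rw [← h, mem_oddDiagram, symm_apply_apply] at hw
    exact not_lt.2 hle hw.1
  · have hv' : (k, v j) ∈ oddDiagram v := by
      rw [mem_oddDiagram, symm_apply_apply]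
      exact ⟨hvjk, hkj, hpar⟩
    rw [h, mem_oddDiagram, mul_swap_symm_apply, symm_apply_apply, swap_apply_right] at hv'
    exact not_lt.2 hik.le hv'.2.1

theorem pattern_of_oddDiagram_mul_swap_eq (hij : i < j) (hv : v i < v j)
    (h : oddDiagram v = oddDiagram (v * swap i j)) :
    (i : ℕ) + 2 ≤ j ∧ ∀ k : Fin n, (k : ℕ) + 1 = j → v k < v i := by
  have hpar := val_mod_two_eq_of_oddDiagram_mul_swap_eq hij hv h
  have hij' : (i : ℕ) < j := hij
  exact ⟨by omega, fun k hk => apply_lt_of_oddDiagram_mul_swap_eq hij hv h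
    (Fin.lt_def.2 (by omega)) (Fin.lt_def.2 (by omega)) (by omega)⟩

end OddDiagram

open OddDiagram in
theorem stmt6 {n : ℕ} (v : Equiv.Perm (Fin n)) (i j : Fin n) (hij : i < j)
    (h : oddDiagram v = oddDiagram (v * Equiv.swap i j)) :
    (i : ℕ) + 2 ≤ (j : ℕ) ∧
      ∀ h' : Fin n, (h' : ℕ) + 1 = (j : ℕ) →
        ((v h' < v i ∧ v i < v j) ∨ (v h' < v j ∧ v j < v i)) := by
  rcases (v.injective.ne hij.ne).lt_or_gt with hv | hv
  · obtain ⟨hgap, hlt⟩ := pattern_of_oddDiagram_mul_swap_eq hij hv h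
    exact ⟨hgap, fun k hk => Or.inl ⟨hlt k hk, hv⟩⟩
  · have hw : (v * swap i j) i < (v * swap i j) j := by simpa using hv
    obtain ⟨hgap, hlt⟩ :=
      pattern_of_oddDiagram_mul_swap_eq hij hw (oddDiagram_mul_swap_eq_symm h)
    refine ⟨hgap, fun k hk => Or.inr ⟨?_, hv⟩⟩
    have hki : k ≠ i := Fin.ne_of_val_ne (by omega)
    have hkj : k ≠ j := Fin.ne_of_val_ne (by omega)
    simpa [swap_apply_of_ne_of_ne hki hkj] using hlt k hk
end

section
/- If v ~ w (same odd diagram) agree for the first k values but not the (k+1)-st (i.e., v^{-1}(i) = w^{-1}(i) for all i ≤ k but v^{-1}(k+1) ≠ w^{-1}(k+1)), then the permutation v̄ obtained from v by transposing positions v^{-1}(k+1) and w^{-1}(k+1) satisfies D_o(v̄) = D_o(v) and v̄^{-1}(i) = w^{-1}(i) for all i ≤ k+1. -/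
/-!
`D_o(u)` is the set of cells `(i, u x)` with `i < x`, `u x < u i` and `i ≢ x (mod 2)`. Exchanging
the values at positions `a ≡ b (mod 2)` with `u a < u b` only affects rows `a, b` and columns
`u a, u b`, and a case check shows that `D_o(u)` survives as soon as no position of the other parity
carrying a value `> u a` lies between `a` and `b`, and none carrying a value in `(u a, u b)` lies
right of `a` or of `b`. For `a = v⁻¹ k` and `b = w⁻¹ k`: `v` and `w` place the values `< k`
identically, so `v b > k`; column `k` of `D_o(v) = D_o(w)` then gives `a ≡ b` and the first
condition, and row `b` the second.
-/

namespace Equiv.Perm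
variable {n : ℕ}

theorem mem_oddDiagram {u : Perm (Fin n)} {i j : Fin n} :
    (i, j) ∈ oddDiagram u ↔ j < u i ∧ i < u.symm j ∧ (i : ℕ) % 2 ≠ (u.symm j : ℕ) % 2 := by
  simp [oddDiagram]

theorem mem_oddDiagram_apply {u : Perm (Fin n)} {i x : Fin n} :
    (i, u x) ∈ oddDiagram u ↔ u x < u i ∧ i < x ∧ (i : ℕ) % 2 ≠ (x : ℕ) % 2 := by
  simp [mem_oddDiagram]

theorem oddDiagram_mul_swap {u : Perm (Fin n)} {a b : Fin n} (hab : (a : ℕ) % 2 = (b : ℕ) % 2)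
    (hlt : u a < u b)
    (hbetween : ∀ i : Fin n, (i : ℕ) % 2 ≠ (a : ℕ) % 2 → u a < u i → (i < a ↔ i < b))
    (hleft : ∀ x : Fin n, (x : ℕ) % 2 ≠ (a : ℕ) % 2 → u a < u x → u x < u b → x < a ∧ x < b) :
    oddDiagram (u * swap a b) = oddDiagram u := by
  ext ⟨i, j⟩
  obtain ⟨x, rfl⟩ := u.surjective j
  have hx : u x = (u * swap a b) (swap a b x) := by simp
  rw [hx, mem_oddDiagram_apply, ← hx, mem_oddDiagram_apply, mul_apply]
  have := hbetween i
  have := hleft x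
  have : x ≠ a → u x ≠ u a := u.injective.ne
  have : x ≠ b → u x ≠ u b := u.injective.ne
  rw [swap_apply_def, swap_apply_def]
  split_ifs <;> subst_vars <;> omega

section SameOddDiagram

variable {v w : Perm (Fin n)} {k : Fin n}

theorem apply_eq_of_apply_lt (hagree : ∀ i < k, v.symm i = w.symm i) {i : Fin n} (h : v i < k) :
    w i = v i := by
  rw [eq_comm, ← w.symm_apply_eq, ← hagree _ h, symm_apply_apply]

theorem lt_apply_iff_lt_apply (hagree : ∀ i < k, v.symm i = w.symm i) {i : Fin n}
    (hia : i ≠ v.symm k) (hib : i ≠ w.symm k) : k < v i ↔ k < w i := by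
  have hv : v i ≠ k := fun h => hia (v.eq_symm_apply.mpr h)
  have hw : w i ≠ k := fun h => hib (w.eq_symm_apply.mpr h)
  have := apply_eq_of_apply_lt hagree (i := i)
  have := apply_eq_of_apply_lt (fun j hj => (hagree j hj).symm) (i := i)
  omega

theorem lt_apply_symm (hagree : ∀ i < k, v.symm i = w.symm i) (hk : v.symm k ≠ w.symm k) :
    k < v (w.symm k) := by
  have hne : v (w.symm k) ≠ k := fun h => hk (v.symm_apply_eq.mpr h.symm)
  have := apply_eq_of_apply_lt hagree (i := w.symm k)
  simp only [apply_symm_apply] at this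
  omega

theorem symm_mod_two_eq (hsim : oddDiagram v = oddDiagram w)
    (hagree : ∀ i < k, v.symm i = w.symm i) (hk : v.symm k ≠ w.symm k) :
    (v.symm k : ℕ) % 2 = (w.symm k : ℕ) % 2 := by
  have hagree' : ∀ i < k, w.symm i = v.symm i := fun i hi => (hagree i hi).symm
  have hv := (Finset.ext_iff.mp hsim (v.symm k, k)).not
  have hw := (Finset.ext_iff.mp hsim (w.symm k, k)).not
  simp only [mem_oddDiagram, apply_symm_apply, lt_irrefl, false_and, not_false_eq_true,
    true_iff, iff_true] at hv hw
  have := lt_apply_symm hagree hk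
  have := lt_apply_symm hagree' hk.symm
  omega

theorem lt_symm_iff_lt_symm (hsim : oddDiagram v = oddDiagram w)
    (hagree : ∀ i < k, v.symm i = w.symm i) (hk : v.symm k ≠ w.symm k) {i : Fin n}
    (hi : (i : ℕ) % 2 ≠ (v.symm k : ℕ) % 2) (hki : k < v i) :
    i < v.symm k ↔ i < w.symm k := by
  have hcol := Finset.ext_iff.mp hsim (i, k)
  simp only [mem_oddDiagram] at hcol
  have hpar := symm_mod_two_eq hsim hagree hk
  have := lt_apply_iff_lt_apply hagree (i := i) (by omega) (by omega)
  omega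

theorem lt_symm_of_lt_apply_of_apply_lt (hsim : oddDiagram v = oddDiagram w)
    (hagree : ∀ i < k, v.symm i = w.symm i) (hk : v.symm k ≠ w.symm k) {p : Fin n}
    (hp : (p : ℕ) % 2 ≠ (v.symm k : ℕ) % 2) (hkp : k < v p) (hpc : v p < v (w.symm k)) :
    p < v.symm k ∧ p < w.symm k := by
  have hrow := Finset.ext_iff.mp hsim (w.symm k, v p)
  rw [mem_oddDiagram_apply, mem_oddDiagram, apply_symm_apply] at hrow
  have hpb : p ≠ w.symm k := by rintro rfl; exact lt_irrefl _ hpc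
  have hpar := symm_mod_two_eq hsim hagree hk
  have := lt_symm_iff_lt_symm hsim hagree hk hp hkp
  omega

theorem symm_mul_swap_apply_of_le (hagree : ∀ i < k, v.symm i = w.symm i) {i : Fin n}
    (hi : i ≤ k) : (v * swap (v.symm k) (w.symm k)).symm i = w.symm i := by
  simp only [mul_def, symm_trans_apply, symm_swap]
  rcases hi.lt_or_eq with hlt | rfl
  · have ha : v.symm i ≠ v.symm k := v.symm.injective.ne hlt.ne
    have hb : v.symm i ≠ w.symm k := hagree i hlt ▸ w.symm.injective.ne hlt.ne
    rw [swap_apply_of_ne_of_ne ha hb, hagree i hlt]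
  · exact swap_apply_left _ _

end SameOddDiagram
end Equiv.Perm

theorem stmt8 {n : ℕ} (v w : Equiv.Perm (Fin n)) (hsim : oddDiagram v = oddDiagram w)
    (k : Fin n) (hagree : ∀ i : Fin n, i < k → v.symm i = w.symm i)
    (hk : v.symm k ≠ w.symm k) :
    oddDiagram (v * Equiv.swap (v.symm k) (w.symm k)) = oddDiagram v ∧
      ∀ i : Fin n, i ≤ k →
        (v * Equiv.swap (v.symm k) (w.symm k)).symm i = w.symm i := by
  refine ⟨?_, fun i => Equiv.Perm.symm_mul_swap_apply_of_le hagree⟩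
  have key := Equiv.Perm.oddDiagram_mul_swap (u := v) (a := v.symm k) (b := w.symm k)
  simp only [Equiv.apply_symm_apply] at key
  exact key (Equiv.Perm.symm_mod_two_eq hsim hagree hk) (Equiv.Perm.lt_apply_symm hagree hk)
    (fun i => Equiv.Perm.lt_symm_iff_lt_symm hsim hagree hk)
    (fun p => Equiv.Perm.lt_symm_of_lt_apply_of_apply_lt hsim hagree hk)
end

section
/- If u, v in S_n have the same odd diagram, then u^{-1}(k) ≡ v^{-1}(k) (mod 2) for every k in [n]; i.e., each value occupies positions of the same parity in all permutations of an odd diagram class. -/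
/-!
Let `P_k(w)` be the increasing list of positions carrying a value `≥ k`, and read off the word
of their parities. Column `k` of the odd diagram consists of the entries of `P_k(w)` that
precede `p = w⁻¹(k)` and have the parity opposite to `p`. If `u` and `v` have the same parity
word at level `k`, equal columns force `u⁻¹(k) ≡ v⁻¹(k)`: a cell of the column has parity
opposite to both, and if the column is empty both positions lie in the initial run of the word.
Deleting a letter from a word only depends on the letter and on the number of opposite letters
before it, so the parity words of `P_{k+1}(u) = P_k(u) \ {u⁻¹(k)}` and `P_{k+1}(v)` agree again,
and induction on `k` finishes the proof.
-/

namespace List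

variable {α : Type*}

theorem append_cons_eq_cons_append_of_forall_eq {l : List α} {c : α} (t : List α)
    (h : ∀ x ∈ l, x = c) : l ++ c :: t = c :: (l ++ t) := by
  induction l with
  | nil => rfl
  | cons a l ih =>
    simp only [mem_cons, forall_eq_or_imp] at h
    rw [cons_append, ih h.2, h.1, cons_append]

theorem append_eq_append_of_append_cons_eq_of_countP_eq [DecidableEq α] {x y z w : List α}
    {c : α} (h : x ++ c :: y = z ++ c :: w) (hcount : x.countP (· != c) = z.countP (· != c)) :
    x ++ y = z ++ w := by
  wlog hxz : ∃ D, z = x ++ D ∧ c :: y = D ++ c :: w generalizing x y z w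
  · obtain ⟨D, hx, hw⟩ := (append_eq_append_iff.1 h).resolve_left hxz
    exact (this h.symm hcount.symm ⟨D, hx, hw⟩).symm
  obtain ⟨D, rfl, hD⟩ := hxz
  have hDc : ∀ d ∈ D, d = c := by simpa [countP_append, countP_eq_zero] using hcount
  rw [append_cons_eq_cons_append_of_forall_eq w hDc, cons_inj_right] at hD
  rw [hD, append_assoc]

theorem eq_and_map_append_eq_of_map_append_cons_eq (f : α → Bool) {X Y Z W : List α} {p q : α}
    (hword : (X ++ p :: Y).map f = (Z ++ q :: W).map f)
    (hbefore : X.filter (fun x => f x != f p) = Z.filter (fun x => f x != f q)) :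
    f p = f q ∧ (X ++ Y).map f = (Z ++ W).map f := by
  have hpq : f p = f q := by
    rcases hX : X.filter (fun x => f x != f p) with _ | ⟨e, t⟩
    · have hXp : ∀ b ∈ X.map f, b = f p := by simpa [filter_eq_nil_iff] using hX
      have hZq : ∀ b ∈ Z.map f, b = f q := by
        simpa [filter_eq_nil_iff] using hbefore.symm.trans hX
      have hhead := congrArg head? hword
      rwa [map_append, map_append, map_cons, map_cons,
        append_cons_eq_cons_append_of_forall_eq _ hXp,
        append_cons_eq_cons_append_of_forall_eq _ hZq, head?_cons, head?_cons,
        Option.some_inj] at hhead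
    · have he : e ∈ X.filter (fun x => f x != f p) := hX ▸ mem_cons_self
      have he' : e ∈ Z.filter (fun x => f x != f q) := hbefore ▸ he
      simp only [mem_filter, bne_iff_ne, ne_eq] at he he'
      revert he he'
      cases f e <;> cases f p <;> cases f q <;> simp
  refine ⟨hpq, ?_⟩
  rw [map_append, map_append]
  refine append_eq_append_of_append_cons_eq_of_countP_eq (c := f p)
    (by simpa [hpq] using hword) ?_
  rw [countP_map, countP_map, countP_eq_length_filter, countP_eq_length_filter]
  simp only [Function.comp_def]
  rw [hbefore, hpq]

theorem Pairwise.filter_lt_and_append_cons [Preorder α] [DecidableLT α] {X Y : List α} {p : α}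
    (h : (X ++ p :: Y).Pairwise (· < ·)) (g : α → Bool) :
    (X ++ p :: Y).filter (fun x => x < p && g x) = X.filter g := by
  rw [pairwise_append, pairwise_cons] at h
  have hY : Y.filter (fun x => x < p && g x) = [] :=
    filter_eq_nil_iff.2 fun y hy => by simp [(h.2.1.1 y hy).not_gt]
  rw [filter_append, filter_cons_of_neg (by simp), hY, append_nil]
  exact filter_congr fun x hx => by simp [h.2.2 x hx p mem_cons_self]

theorem Pairwise.erase_append_cons [Preorder α] [DecidableEq α] {X Y : List α} {p : α}
    (h : (X ++ p :: Y).Pairwise (· < ·)) : (X ++ p :: Y).erase p = X ++ Y := by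
  have hpX : p ∉ X := fun hp => lt_irrefl p ((pairwise_append.1 h).2.2 p hp p mem_cons_self)
  rw [erase_append_right _ hpX, erase_cons_head]

theorem eq_and_map_erase_eq_of_filter_lt_eq [Preorder α] [DecidableLT α] [DecidableEq α]
    (f : α → Bool) {A B : List α} {p q : α}
    (hA : A.Pairwise (· < ·)) (hB : B.Pairwise (· < ·)) (hp : p ∈ A) (hq : q ∈ B)
    (hword : A.map f = B.map f)
    (hbefore : A.filter (fun x => x < p && f x != f p) = B.filter (fun x => x < q && f x != f q)) :
    f p = f q ∧ (A.erase p).map f = (B.erase q).map f := by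
  obtain ⟨X, Y, rfl⟩ := append_of_mem hp
  obtain ⟨Z, W, rfl⟩ := append_of_mem hq
  rw [hA.filter_lt_and_append_cons, hB.filter_lt_and_append_cons] at hbefore
  rw [hA.erase_append_cons, hB.erase_append_cons]
  exact eq_and_map_append_eq_of_map_append_cons_eq f hword hbefore

end List

theorem Nat.bodd_eq_bodd_iff {a b : ℕ} : a.bodd = b.bodd ↔ a % 2 = b % 2 := by
  rw [Nat.mod_two_of_bodd, Nat.mod_two_of_bodd]
  cases a.bodd <;> cases b.bodd <;> simp

section

variable {n : ℕ}

def positionsOfValuesGe (w : Equiv.Perm (Fin n)) (k : ℕ) : List (Fin n) :=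
  (List.finRange n).filter (fun i => k ≤ (w i : ℕ))

theorem pairwise_lt_positionsOfValuesGe (w : Equiv.Perm (Fin n)) (k : ℕ) :
    (positionsOfValuesGe w k).Pairwise (· < ·) :=
  (List.pairwise_lt_finRange n).filter _

theorem symm_mem_positionsOfValuesGe (w : Equiv.Perm (Fin n)) (k : Fin n) :
    w.symm k ∈ positionsOfValuesGe w k := by
  simp [positionsOfValuesGe]

theorem positionsOfValuesGe_succ (w : Equiv.Perm (Fin n)) (k : Fin n) :
    positionsOfValuesGe w (k + 1) = (positionsOfValuesGe w k).erase (w.symm k) := by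
  unfold positionsOfValuesGe
  rw [((List.nodup_finRange n).filter _).erase_eq_filter, List.filter_filter]
  refine List.filter_congr fun i _ => ?_
  have : i = w.symm k ↔ (w i : ℕ) = k := by rw [Equiv.eq_symm_apply, Fin.val_inj]
  rw [Bool.eq_iff_iff]
  simp only [Bool.and_eq_true, decide_eq_true_eq, bne_iff_ne, ne_eq, this]
  omega

theorem filter_positionsOfValuesGe_eq_column (w : Equiv.Perm (Fin n)) (k : Fin n) :
    (positionsOfValuesGe w k).filter
        (fun i => i < w.symm k && (i : ℕ).bodd != (w.symm k : ℕ).bodd) =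
      (List.finRange n).filter (fun i => (i, k) ∈ oddDiagram w) := by
  rw [positionsOfValuesGe, List.filter_filter]
  refine List.filter_congr fun i _ => ?_
  have hwi : i < w.symm k → w i ≠ k := fun hi hik =>
    hi.ne (by rw [← hik, Equiv.symm_apply_apply])
  rw [Bool.eq_iff_iff]
  simp only [oddDiagram, Finset.mem_filter, Finset.mem_univ, true_and, Fin.val_fin_lt,
    Fin.val_fin_le, Bool.and_eq_true, decide_eq_true_eq, bne_iff_ne, ne_eq, Nat.bodd_eq_bodd_iff]
  constructor
  · rintro ⟨⟨hi, hparity⟩, hk⟩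
    exact ⟨lt_of_le_of_ne hk (hwi hi).symm, hi, hparity⟩
  · rintro ⟨hk, hi, hparity⟩
    exact ⟨⟨hi, hparity⟩, hk.le⟩

def parityWord (w : Equiv.Perm (Fin n)) (k : ℕ) : List Bool :=
  (positionsOfValuesGe w k).map (fun i : Fin n => (i : ℕ).bodd)

theorem bodd_symm_eq_and_parityWord_succ_eq {u v : Equiv.Perm (Fin n)}
    (h : oddDiagram u = oddDiagram v) (k : Fin n) (hword : parityWord u k = parityWord v k) :
    (u.symm k : ℕ).bodd = (v.symm k : ℕ).bodd ∧
      parityWord u (k + 1) = parityWord v (k + 1) := by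
  rw [parityWord, parityWord, positionsOfValuesGe_succ, positionsOfValuesGe_succ]
  refine List.eq_and_map_erase_eq_of_filter_lt_eq _ (pairwise_lt_positionsOfValuesGe u k)
    (pairwise_lt_positionsOfValuesGe v k) (symm_mem_positionsOfValuesGe u k)
    (symm_mem_positionsOfValuesGe v k) hword ?_
  rw [filter_positionsOfValuesGe_eq_column, filter_positionsOfValuesGe_eq_column, h]

theorem parityWord_eq_of_oddDiagram_eq {u v : Equiv.Perm (Fin n)}
    (h : oddDiagram u = oddDiagram v) (k : ℕ) (hk : k < n) : parityWord u k = parityWord v k := by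
  induction k with
  | zero => simp [parityWord, positionsOfValuesGe]
  | succ k ih =>
    exact (bodd_symm_eq_and_parityWord_succ_eq h ⟨k, by omega⟩ (ih (by omega))).2

end

theorem stmt11 {n : ℕ} (u v : Equiv.Perm (Fin n))
    (h : oddDiagram u = oddDiagram v) :
    ∀ k : Fin n, (u.symm k : ℕ) % 2 = (v.symm k : ℕ) % 2 := by
  intro k
  rw [← Nat.bodd_eq_bodd_iff]
  exact (bodd_symm_eq_and_parityWord_succ_eq h k
    (parityWord_eq_of_oddDiagram_eq h k k.isLt)).1
end

section
/- For any w in S_n, the set Perm_n(D_o(w)) of permutations with the same odd diagram as w has a unique minimum element with respect to Bruhat order: there exists u with D_o(u) = D_o(w) such that u ≤ z in Bruhat order for all z with D_o(z) = D_o(w). -/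
/-!
Let `u` have minimal length among the permutations with odd diagram `D_o(w)`. For another `z`
in this class, let `p` be the first position where `z` and `u` differ and `j := z⁻¹ (u p)`.
If `u p < z p`, equality of the odd diagrams forces `p < j`, `j ≡ p (mod 2)`, and that every
`q > p` of the other parity has `z q` outside the value interval `[z j, z p]`, and even below it
when `q < j`. These are exactly the conditions under which `z * (p j)` has the same odd diagram;
it is a shorter element below `z` in Bruhat order, so induction on the length gives `u ≤ z`.
The case `z p < u p` cannot occur: the same move applied to `u` would shorten `u`.
-/

open Equiv Finset

section

variable {n : ℕ}

lemma apply_mem_oddDiagram_iff (w : Perm (Fin n)) (r q : Fin n) :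
    (r, w q) ∈ oddDiagram w ↔ w q < w r ∧ r < q ∧ (r : ℕ) % 2 ≠ (q : ℕ) % 2 := by
  simp [oddDiagram]

lemma lt_apply_of_mem_oddDiagram {w : Perm (Fin n)} {r v : Fin n} (h : (r, v) ∈ oddDiagram w) :
    v < w r := by
  obtain ⟨q, rfl⟩ := w.surjective v
  exact ((apply_mem_oddDiagram_iff w r q).1 h).1

lemma oddDiagram_mul_swap {z : Perm (Fin n)} {p j : Fin n} (hpj : p < j)
    (hpar : (j : ℕ) % 2 = (p : ℕ) % 2) (hzj : z j < z p)
    (hout : ∀ q, p < q → (q : ℕ) % 2 ≠ (p : ℕ) % 2 → z q < z j ∨ z p < z q)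
    (hin : ∀ q, p < q → q < j → (q : ℕ) % 2 ≠ (p : ℕ) % 2 → z q < z j) :
    oddDiagram (z * swap p j) = oddDiagram z := by
  ext ⟨r, v⟩
  obtain ⟨q, rfl⟩ := (z * swap p j).surjective v
  rw [apply_mem_oddDiagram_iff, Perm.mul_apply, apply_mem_oddDiagram_iff, Perm.mul_apply]
  simp only [swap_apply_def]
  split_ifs <;> subst_vars <;> grind

lemma exists_oddDiagram_mul_swap_eq {z z' : Perm (Fin n)} (h : oddDiagram z = oddDiagram z')
    {p : Fin n} (hpre : ∀ k < p, z k = z' k) (hlt : z' p < z p) :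
    ∃ j, p < j ∧ z j < z p ∧ oddDiagram (z * swap p j) = oddDiagram z := by
  have hmem : ∀ {r q}, z q < z r → r < q → (r : ℕ) % 2 ≠ (q : ℕ) % 2 →
      (r, z q) ∈ oddDiagram z' := fun h₁ h₂ h₃ =>
    h ▸ (apply_mem_oddDiagram_iff z _ _).2 ⟨h₁, h₂, h₃⟩
  have hbefore : ∀ {r}, (r, z' p) ∈ oddDiagram z' → r < p := fun hr =>
    ((apply_mem_oddDiagram_iff z' _ _).1 hr).2.1
  obtain ⟨j, hj⟩ := z.surjective (z' p)
  have hzj : z j < z p := hj ▸ hlt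
  have hpj : p < j := by
    rcases lt_trichotomy j p with hjp | rfl | hpj
    · exact absurd hjp (z'.injective ((hpre j hjp).symm.trans hj)).not_lt
    · exact absurd hzj (lt_irrefl _)
    · exact hpj
  have hpar : (j : ℕ) % 2 = (p : ℕ) % 2 := by
    by_contra hne
    exact lt_irrefl p (hbefore (hj ▸ hmem hzj hpj (Ne.symm hne)))
  have hout : ∀ q, p < q → (q : ℕ) % 2 ≠ (p : ℕ) % 2 → z q < z j ∨ z p < z q := by
    intro q hpq hq
    rcases lt_or_gt_of_ne (z.injective.ne (ne_of_gt hpq)) with hqp | hpq'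
    · exact Or.inl (hj ▸ lt_apply_of_mem_oddDiagram (hmem hqp hpq (Ne.symm hq)))
    · exact Or.inr hpq'
  have hin : ∀ q, p < q → q < j → (q : ℕ) % 2 ≠ (p : ℕ) % 2 → z q < z j := by
    intro q hpq hqj hq
    refine (hout q hpq hq).resolve_right fun hpq' => ?_
    exact lt_asymm hpq (hbefore (hj ▸ hmem (hzj.trans hpq') hqj (hpar ▸ hq)))
  exact ⟨j, hpj, hzj, oddDiagram_mul_swap hpj hpar hzj hout hin⟩

def inversions (w : Perm (Fin n)) : Finset (Fin n × Fin n) :=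
  univ.filter fun x => x.1 < x.2 ∧ w x.2 < w x.1

lemma invLength_mul_swap_lt (z : Perm (Fin n)) {p j : Fin n} (hpj : p < j) (hzj : z j < z p) :
    invLength (z * swap p j) < invLength z := by
  -- pairs with an entry strictly between `p` and `j` keep their status, the others are moved by
  -- the swap; this injects the inversions of `z * swap p j` into those of `z` other than `(p, j)`
  let Φ : Fin n × Fin n → Fin n × Fin n := fun x =>
    if (p < x.1 ∧ x.1 < j) ∨ (p < x.2 ∧ x.2 < j) then x else (swap p j x.1, swap p j x.2)
  have hΦ : Function.Involutive Φ := by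
    rintro ⟨a, b⟩
    simp only [Φ, swap_apply_def]
    split_ifs <;> grind
  have hmaps : ∀ x ∈ inversions (z * swap p j), Φ x ∈ inversions z \ {(p, j)} := by
    rintro ⟨a, b⟩
    simp only [Φ, inversions, mem_filter, mem_univ, true_and, mem_sdiff, mem_singleton,
      Perm.mul_apply, swap_apply_def]
    split_ifs <;> grind
  calc invLength (z * swap p j) ≤ (inversions z \ {(p, j)}).card :=
        card_le_card_of_injOn Φ hmaps hΦ.injective.injOn
    _ < invLength z :=
        card_lt_card (sdiff_ssubset (by simpa [inversions] using ⟨hpj, hzj⟩) (by simp))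

lemma bruhatLE_mul_swap (z : Perm (Fin n)) {p j : Fin n} (hpj : p < j) (hzj : z j < z p) :
    bruhatLE (z * swap p j) z :=
  .single ⟨swap p j, ⟨p, j, hpj.ne, rfl⟩, by simp [mul_assoc],
    invLength_mul_swap_lt z hpj hzj⟩

lemma exists_forall_lt_eq_and_ne {ι α : Type*} [Preorder ι] [WellFoundedLT ι] {f g : ι → α}
    (h : f ≠ g) : ∃ i, (∀ k < i, f k = g k) ∧ f i ≠ g i := by
  obtain ⟨i, hi, hmin⟩ := wellFounded_lt.has_min {i | f i ≠ g i} (Function.ne_iff.1 h)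
  exact ⟨i, fun k hk => not_not.1 fun hne => hmin k hne hk, hi⟩

lemma bruhatLE_of_invLength_minimal {u : Perm (Fin n)}
    (hmin : ∀ z, oddDiagram z = oddDiagram u → invLength u ≤ invLength z)
    (z : Perm (Fin n)) (hz : oddDiagram z = oddDiagram u) : bruhatLE u z := by
  induction hk : invLength z using Nat.strong_induction_on generalizing z with
  | _ k ih =>
  by_cases hzu : z = u
  · exact hzu ▸ .refl
  obtain ⟨p, hpre, hp⟩ := exists_forall_lt_eq_and_ne (DFunLike.coe_injective.ne hzu)
  rcases lt_or_gt_of_ne hp with hlt | hgt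
  · obtain ⟨j, hpj, hj, hu⟩ :=
      exists_oddDiagram_mul_swap_eq hz.symm (fun k hk => (hpre k hk).symm) hlt
    exact absurd (hmin _ hu) (invLength_mul_swap_lt u hpj hj).not_ge
  · obtain ⟨j, hpj, hj, hz'⟩ := exists_oddDiagram_mul_swap_eq hz hpre hgt
    exact (ih _ (hk ▸ invLength_mul_swap_lt z hpj hj) _ (hz'.trans hz) rfl).trans
      (bruhatLE_mul_swap z hpj hj)

end

theorem stmt12 {n : ℕ} (w : Equiv.Perm (Fin n)) :
    ∃ u : Equiv.Perm (Fin n), oddDiagram u = oddDiagram w ∧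
      ∀ z : Equiv.Perm (Fin n), oddDiagram z = oddDiagram w → bruhatLE u z := by
  obtain ⟨u, hu, hmin⟩ :=
    (univ.filter fun z => oddDiagram z = oddDiagram w).exists_min_image invLength ⟨w, by simp⟩
  simp only [mem_filter, mem_univ, true_and] at hu hmin
  exact ⟨u, hu, fun z hz => bruhatLE_of_invLength_minimal
    (fun z' hz' => hmin z' (hz'.trans hu)) z (hz.trans hu.symm)⟩
end

section
/- If a transposition (i j) with i < j is legal for v (i.e., D_o(v·(i j)) = D_o(v) with v ≠ v·(i j)), then j ≥ i + 2 and v(j-1) < min{v(i), v(j)}. -/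
/-! If `v` and `v * (i j)` have the same odd diagram, then for every `i ≤ p < j` of parity opposite
to `j`, the cells in row `p` of the columns `v j` and `v i` are absent from both diagrams (such a
cell would move to a column whose source lies left of `p`); hence `v p ≤ v j` and
`(v * (i j)) p ≤ v i`. For `p = i` these say `v i = v j`, so `i, j` cannot be adjacent; for
`p = j - 1` they give `v (j - 1) < min (v i) (v j)`. -/

open Equiv

theorem mk_apply_mem_oddDiagram_iff {n : ℕ} (w : Perm (Fin n)) (p q : Fin n) :
    (p, w q) ∈ oddDiagram w ↔ w q < w p ∧ p < q ∧ (p : ℕ) % 2 ≠ (q : ℕ) % 2 := by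
  simp [oddDiagram]

theorem apply_le_of_oddDiagram_eq {n : ℕ} {u u' : Perm (Fin n)}
    (hD : oddDiagram u = oddDiagram u') {p q r : Fin n} (hpq : p < q)
    (hpar : (p : ℕ) % 2 ≠ (q : ℕ) % 2) (hrp : r ≤ p) (hr : u' r = u q) : u p ≤ u q := by
  by_contra! hlt
  have hmem : (p, u q) ∈ oddDiagram u' := by
    rw [← hD, mk_apply_mem_oddDiagram_iff]
    exact ⟨hlt, hpq, hpar⟩
  rw [← hr, mk_apply_mem_oddDiagram_iff] at hmem
  exact absurd hmem.2.1 (not_lt.mpr hrp)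

theorem apply_le_of_oddDiagram_mul_swap_eq {n : ℕ} {v : Perm (Fin n)} {i j p : Fin n}
    (h : oddDiagram (v * swap i j) = oddDiagram v) (hip : i ≤ p) (hpj : p < j)
    (hpar : (p : ℕ) % 2 ≠ (j : ℕ) % 2) : v p ≤ v j ∧ (v * swap i j) p ≤ v i :=
  ⟨apply_le_of_oddDiagram_eq h.symm hpj hpar hip (by simp),
    by simpa using apply_le_of_oddDiagram_eq h hpj hpar hip (by simp)⟩

theorem stmt18 {n : ℕ} (v : Equiv.Perm (Fin n)) (i j : Fin n) (hij : i < j)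
    (h : oddDiagram (v * Equiv.swap i j) = oddDiagram v) :
    (i : ℕ) + 2 ≤ (j : ℕ) ∧
      ∀ h' : Fin n, (h' : ℕ) + 1 = (j : ℕ) → v h' < min (v i) (v j) := by
  have hij' : (i : ℕ) < j := hij
  have hgap : (i : ℕ) + 2 ≤ (j : ℕ) := by
    by_contra! hadj
    obtain ⟨hle, hge⟩ := apply_le_of_oddDiagram_mul_swap_eq h le_rfl hij (by omega)
    exact v.injective.ne hij.ne (le_antisymm hle (by simpa using hge))
  refine ⟨hgap, fun p hpj => ?_⟩
  have hip : i < p := Fin.lt_def.mpr (by omega)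
  have hpj' : p < j := Fin.lt_def.mpr (by omega)
  obtain ⟨hle_j, hle_i⟩ := apply_le_of_oddDiagram_mul_swap_eq h hip.le hpj' (by omega)
  rw [Perm.mul_apply, swap_apply_of_ne_of_ne hip.ne' hpj'.ne] at hle_i
  exact lt_min (hle_i.lt_of_ne (v.injective.ne hip.ne')) (hle_j.lt_of_ne (v.injective.ne hpj'.ne))
end
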